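/- Let (T,<_T,<_lex) be a lexicographically ordered Aronszajn tree and let B ⊆ [T]² be a normal family. Then B contains an uncountable separated subfamily; indeed, there are an uncountable B' ⊆ B and c ∈ T such that b(0) <_lex c <_lex b(1) for all b ∈ B'. -/

import Mathlib

noncomputable section

open Set

/-- The ordinal `ω₁`. -/
def omega1 : Ordinal := (Cardinal.aleph 1).ord

/-- A set-theoretic tree: a partial order in which the set of predecessors of every
node is well-ordered by the order. -/
def IsSetTree (T : Type) [PartialOrder T] : Prop :=
  ∀ t : T, IsWellOrder {s : T // s < t} (fun a b => (a : T) < (b : T))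

/-- The height of a node: the order type of its set of predecessors. -/
noncomputable def nodeHt {T : Type} [PartialOrder T] (hT : IsSetTree T) (t : T) : Ordinal :=
  @Ordinal.type {s : T // s < t} (fun a b => (a : T) < (b : T)) (hT t)

-- `restr hT t ξ` is the unique `s ≤ t` of height `ξ` (junk value `t` if there is none).
open Classical in
noncomputable def restr {T : Type} [PartialOrder T] (hT : IsSetTree T) (t : T) (ξ : Ordinal) : T :=
  if h : ∃ s : T, s ≤ t ∧ nodeHt hT s = ξ then h.choose else t

/-- Incomparability in the tree order. -/
def Incomp {T : Type} [PartialOrder T] (s t : T) : Prop := ¬ s ≤ t ∧ ¬ t ≤ s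

/-- `Δ(s,t)`: the least `α` such that `s↾α ≠ t↾α`. -/
noncomputable def delta {T : Type} [PartialOrder T] (hT : IsSetTree T) (s t : T) : Ordinal :=
  sInf {α : Ordinal | restr hT s α ≠ restr hT t α}

/-- A family of linear orders on the levels of the tree, coded as a single relation
relating only nodes of the same height. -/
def IsLevelOrderFamily {T : Type} [PartialOrder T] (hT : IsSetTree T) (lo : T → T → Prop) : Prop :=
  (∀ s t, lo s t → nodeHt hT s = nodeHt hT t) ∧
  (∀ t, ¬ lo t t) ∧
  (∀ s t u, lo s t → lo t u → lo s u) ∧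
  (∀ s t, s ≠ t → nodeHt hT s = nodeHt hT t → lo s t ∨ lo t s)

/-- The lexicographic ordering induced by the level orders `lo`:
`t <lex s` iff `t <_T s`, or `t ⊥ s` and `t↾Δ(t,s) ◁ s↾Δ(t,s)`. -/
def lexLT {T : Type} [PartialOrder T] (hT : IsSetTree T) (lo : T → T → Prop) (t s : T) : Prop :=
  t < s ∨ (Incomp t s ∧ lo (restr hT t (delta hT t s)) (restr hT s (delta hT t s)))

/-- An `ω₁`-tree: height `ω₁` and all levels countable. -/
def IsOmega1Tree {T : Type} [PartialOrder T] (hT : IsSetTree T) : Prop :=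
  (∀ t : T, nodeHt hT t < omega1) ∧
  (∀ α : Ordinal, α < omega1 → ∃ t : T, nodeHt hT t = α) ∧
  (∀ α : Ordinal, {t : T | nodeHt hT t = α}.Countable)

def NoUncountableChain (T : Type) [PartialOrder T] : Prop :=
  ∀ C : Set T, IsChain (· ≤ ·) C → C.Countable

def NoUncountableAntichain (T : Type) [PartialOrder T] : Prop :=
  ∀ A : Set T, (∀ s ∈ A, ∀ t ∈ A, s ≠ t → Incomp s t) → A.Countable

/-- An Aronszajn tree: an `ω₁`-tree with no uncountable chains. -/
def IsAronszajnTree {T : Type} [PartialOrder T] (hT : IsSetTree T) : Prop :=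
  IsOmega1Tree hT ∧ NoUncountableChain T

/-- A Suslin tree: an `ω₁`-tree with no uncountable chains and no uncountable antichains. -/
def IsSuslinTree {T : Type} [PartialOrder T] (hT : IsSetTree T) : Prop :=
  IsOmega1Tree hT ∧ NoUncountableChain T ∧ NoUncountableAntichain T

/-- A family of pairs is pairwise disjoint if distinct members are disjoint as sets. -/
def PairwiseDisjointPairs {T : Type} (A : Set (T × T)) : Prop :=
  ∀ a ∈ A, ∀ b ∈ A, a ≠ b → a.1 ≠ b.1 ∧ a.1 ≠ b.2 ∧ a.2 ≠ b.1 ∧ a.2 ≠ b.2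

/-- A family of pairs is separated if some `c` lies strictly between the coordinates
of every member. -/
def SeparatedPairs {T : Type} (lt : T → T → Prop) (A : Set (T × T)) : Prop :=
  ∃ c : T, ∀ a ∈ A, lt a.1 c ∧ lt c a.2

/-- `tpPerp hT lo a b t`: the pair `(a,b)` realizes the type `t` in the lexicographic
order and moreover `a i ⊥ b i` in the tree order, for `i < 2`. (`true` codes `<`.) -/
def tpPerp {T : Type} [PartialOrder T] (hT : IsSetTree T) (lo : T → T → Prop)
    (a b : T × T) (t : Fin 2 → Bool) : Prop :=
  Incomp a.1 b.1 ∧ Incomp a.2 b.2 ∧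
  (if t 0 then lexLT hT lo a.1 b.1 else lexLT hT lo b.1 a.1) ∧
  (if t 1 then lexLT hT lo a.2 b.2 else lexLT hT lo b.2 a.2)

/-- The weakly bi-entangled property of a lexicographically ordered tree. -/
def WeaklyBiEntangled {T : Type} [PartialOrder T] (hT : IsSetTree T) (lo : T → T → Prop) : Prop :=
  ∀ A : Set (T × T), ¬ A.Countable →
    (∀ a ∈ A, lexLT hT lo a.1 a.2) →
    PairwiseDisjointPairs A → SeparatedPairs (lexLT hT lo) A →
    ∃ ξ₀ : Ordinal, ξ₀ < omega1 ∧
      ∀ b ∈ A, ξ₀ ≤ nodeHt hT b.1 → ξ₀ ≤ nodeHt hT b.2 →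
        ∀ t : Fin 2 → Bool,
          ∃ a ∈ A, nodeHt hT a.1 < ξ₀ ∧ nodeHt hT a.2 < ξ₀ ∧ tpPerp hT lo a b t

/-- A normal family of pairs. -/
def NormalFamily {T : Type} [PartialOrder T] (hT : IsSetTree T) (lo : T → T → Prop)
    (B : Set (T × T)) : Prop :=
  ¬ B.Countable ∧
  (∀ b ∈ B, lexLT hT lo b.1 b.2) ∧
  PairwiseDisjointPairs B ∧
  (∀ b ∈ B, nodeHt hT b.1 = nodeHt hT b.2) ∧
  BddAbove {α : Ordinal | ∃ b ∈ B, α = delta hT b.1 b.2} ∧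
  sSup {α : Ordinal | ∃ b ∈ B, α = delta hT b.1 b.2} <
    sInf {α : Ordinal | ∃ b ∈ B, α = nodeHt hT b.1} ∧
  {α : Ordinal | ∃ b ∈ B, α = nodeHt hT b.1} =
    {α : Ordinal | sInf {α : Ordinal | ∃ b ∈ B, α = nodeHt hT b.1} ≤ α ∧ α < omega1}


/-! All splitting levels `Δ(b)` lie below `δ = sup Δ(b) < ω₁`, so `c_b := b(1)↾(Δ(b)+1)` ranges over
the countable set of nodes of height `≤ δ + 1`. When `b` lies above level `δ + 1`, `c_b` is a proper
predecessor of `b(1)` that splits from `b(0)` exactly where `b(1)` does, so `b(0) <lex c_b <lex b(1)`.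
An uncountable fibre of `b ↦ c_b` is the required subfamily. -/

lemma add_one_lt_omega1 {α : Ordinal} (h : α < omega1) : α + 1 < omega1 :=
  (Cardinal.isSuccLimit_ord (Cardinal.aleph0_le_aleph 1)).add_one_lt h

lemma countable_Iic_of_lt_omega1 {α : Ordinal} (h : α < omega1) : (Iic α).Countable := by
  have hIio : (Iio (α + 1)).Countable := by
    rw [← Cardinal.le_aleph0_iff_set_countable, Cardinal.mk_Iio_ordinal, Cardinal.lift_le_aleph0,
      ← Cardinal.lt_aleph_one_iff, ← Cardinal.lt_ord]
    exact add_one_lt_omega1 h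
  exact hIio.mono fun β (hβ : β ≤ α) => Order.lt_add_one_iff.2 hβ

lemma exists_not_countable_fiber {α β : Type*} {s : Set α} {t : Set β} {f : α → β}
    (hf : MapsTo f s t) (ht : t.Countable) (hs : ¬ s.Countable) :
    ∃ y, ¬ {x ∈ s | f x = y}.Countable := by
  by_contra! hfib
  refine hs ((ht.biUnion fun y _ => hfib y).mono fun x hx => mem_biUnion (hf hx) ?_)
  exact show x ∈ {x' ∈ s | f x' = f x} from ⟨hx, rfl⟩

lemma PairwiseDisjointPairs.injOn_fst {T : Type} {A : Set (T × T)} (hA : PairwiseDisjointPairs A) :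
    InjOn Prod.fst A := fun a ha b hb hab => by
  by_contra hne
  exact (hA a ha b hb hne).1 hab

lemma le_total_of_le {T : Type} [PartialOrder T] (hT : IsSetTree T) {s₁ s₂ t : T}
    (h₁ : s₁ ≤ t) (h₂ : s₂ ≤ t) : s₁ ≤ s₂ ∨ s₂ ≤ s₁ := by
  rcases h₁.lt_or_eq with h₁ | rfl
  · rcases h₂.lt_or_eq with h₂ | rfl
    · have := hT t
      rcases trichotomous_of (fun a b : {u : T // u < t} => (a : T) < b) ⟨s₁, h₁⟩ ⟨s₂, h₂⟩
        with h | h | h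
      · exact Or.inl h.le
      · exact Or.inl (congrArg Subtype.val h).le
      · exact Or.inr h.le
    · exact Or.inl h₁.le
  · exact Or.inr h₂

section SetTree

variable {T : Type} [PartialOrder T] (hT : IsSetTree T)

lemma nodeHt_eq_typein {s t : T} (h : s < t) :
    nodeHt hT s = @Ordinal.typein _ (fun a b : {u : T // u < t} => (a : T) < b) (hT t) ⟨s, h⟩ := by
  have := hT s
  have := hT t
  rw [← Ordinal.type_subrel]
  exact Ordinal.type_eq.2 ⟨RelIso.mk (Equiv.mk (fun u => ⟨⟨u.1, u.2.trans h⟩, u.2⟩)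
    (fun y => ⟨y.1.1, y.2⟩) (fun _ => rfl) (fun _ => rfl)) Iff.rfl⟩

lemma nodeHt_strictMono : StrictMono (nodeHt hT) := fun s t h => by
  have := hT t
  rw [nodeHt_eq_typein hT h]
  exact Ordinal.typein_lt_type _ _

lemma eq_of_le_of_le_of_nodeHt_eq {s₁ s₂ t : T} (h₁ : s₁ ≤ t) (h₂ : s₂ ≤ t)
    (he : nodeHt hT s₁ = nodeHt hT s₂) : s₁ = s₂ := by
  rcases le_total_of_le hT h₁ h₂ with h | h
  · exact h.eq_of_not_lt fun hlt => (nodeHt_strictMono hT hlt).ne he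
  · exact (h.eq_of_not_lt fun hlt => (nodeHt_strictMono hT hlt).ne he.symm).symm

lemma exists_le_nodeHt_eq {t : T} {ξ : Ordinal} (h : ξ ≤ nodeHt hT t) :
    ∃ s ≤ t, nodeHt hT s = ξ := by
  rcases h.lt_or_eq with h | rfl
  · have := hT t
    obtain ⟨s, rfl⟩ := Ordinal.typein_surj (fun a b : {u : T // u < t} => (a : T) < b) h
    exact ⟨s.1, s.2.le, nodeHt_eq_typein hT s.2⟩
  · exact ⟨t, le_rfl, rfl⟩

lemma restr_le {t : T} {ξ : Ordinal} (h : ξ ≤ nodeHt hT t) : restr hT t ξ ≤ t := by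
  rw [restr, dif_pos (exists_le_nodeHt_eq hT h)]
  exact (exists_le_nodeHt_eq hT h).choose_spec.1

lemma nodeHt_restr {t : T} {ξ : Ordinal} (h : ξ ≤ nodeHt hT t) : nodeHt hT (restr hT t ξ) = ξ := by
  rw [restr, dif_pos (exists_le_nodeHt_eq hT h)]
  exact (exists_le_nodeHt_eq hT h).choose_spec.2

lemma restr_lt {t : T} {ξ : Ordinal} (h : ξ < nodeHt hT t) : restr hT t ξ < t :=
  (restr_le hT h.le).lt_of_ne fun he =>
    h.ne' ((congrArg (nodeHt hT) he).symm.trans (nodeHt_restr hT h.le))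

lemma restr_nodeHt_of_le {s t : T} (h : s ≤ t) : restr hT t (nodeHt hT s) = s :=
  have hle := (nodeHt_strictMono hT).monotone h
  eq_of_le_of_le_of_nodeHt_eq hT (restr_le hT hle) h (nodeHt_restr hT hle)

lemma restr_of_le {s t : T} (h : s ≤ t) {ξ : Ordinal} (hξ : ξ ≤ nodeHt hT s) :
    restr hT t ξ = restr hT s ξ := by
  conv_lhs => rw [← nodeHt_restr hT hξ]
  exact restr_nodeHt_of_le hT ((restr_le hT hξ).trans h)

lemma restr_delta_ne {u v : T} (hne : u ≠ v) (he : nodeHt hT u = nodeHt hT v) :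
    restr hT u (delta hT u v) ≠ restr hT v (delta hT u v) := by
  refine csInf_mem (s := {α | restr hT u α ≠ restr hT v α}) ⟨nodeHt hT u, ?_⟩
  change restr hT u _ ≠ restr hT v _
  rwa [restr_nodeHt_of_le hT le_rfl, he, restr_nodeHt_of_le hT le_rfl]

lemma restr_eq_of_lt_delta {u v : T} {α : Ordinal} (h : α < delta hT u v) :
    restr hT u α = restr hT v α :=
  not_not.1 (notMem_of_lt_csInf' h)

lemma delta_eq_of_le {u v c : T} (hne : restr hT u (delta hT u v) ≠ restr hT v (delta hT u v))
    (hc : c ≤ v) (hδ : delta hT u v ≤ nodeHt hT c) : delta hT u c = delta hT u v := by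
  have hmem : delta hT u v ∈ {α | restr hT u α ≠ restr hT c α} := by
    change restr hT u _ ≠ restr hT c _
    rwa [← restr_of_le hT hc hδ]
  refine le_antisymm (csInf_le (OrderBot.bddBelow _) hmem) (le_csInf ⟨_, hmem⟩ fun α hα => ?_)
  by_contra! hlt
  exact hα ((restr_eq_of_lt_delta hT hlt).trans (restr_of_le hT hc (hlt.le.trans hδ)))

lemma lexLT_restr_delta_add_one {lo : T → T → Prop} {u v : T} (huv : lexLT hT lo u v)
    (he : nodeHt hT u = nodeHt hT v) (hlt : delta hT u v + 1 < nodeHt hT v) :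
    lexLT hT lo u (restr hT v (delta hT u v + 1)) ∧
      lexLT hT lo (restr hT v (delta hT u v + 1)) v := by
  set d := delta hT u v
  set c := restr hT v (d + 1)
  obtain ⟨hinc, hlo⟩ : Incomp u v ∧ lo (restr hT u d) (restr hT v d) :=
    huv.resolve_left fun h => (nodeHt_strictMono hT h).ne he
  have hdne : restr hT u d ≠ restr hT v d := restr_delta_ne hT (fun h => hinc.1 h.le) he
  have hcv : c ≤ v := restr_le hT hlt.le
  have hcht : nodeHt hT c = d + 1 := nodeHt_restr hT hlt.le
  have hdc : d ≤ nodeHt hT c := hcht ▸ le_self_add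
  have hcd : restr hT c d = restr hT v d := (restr_of_le hT hcv hdc).symm
  refine ⟨Or.inr ⟨⟨fun huc => ?_, fun hcu => ?_⟩, ?_⟩, Or.inl (restr_lt hT hlt)⟩
  · exact hlt.not_ge (he ▸ hcht ▸ (nodeHt_strictMono hT).monotone huc)
  · exact hdne ((restr_of_le hT hcu hdc).trans hcd)
  · rwa [delta_eq_of_le hT hdne hcv hdc, hcd]

lemma countable_setOf_nodeHt_le (hlev : ∀ α, {t : T | nodeHt hT t = α}.Countable)
    {α : Ordinal} (h : α < omega1) : {t : T | nodeHt hT t ≤ α}.Countable :=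
  ((countable_Iic_of_lt_omega1 h).biUnion fun β _ => hlev β).mono fun t (ht : nodeHt hT t ≤ α) =>
    mem_biUnion (show nodeHt hT t ∈ Iic α from ht) rfl

end SetTree

theorem normalFamily_has_uncountable_separated_subfamily_general {T : Type} [PartialOrder T]
    (hT : IsSetTree T) (lo : T → T → Prop)
    (hAron : IsAronszajnTree hT)
    (B : Set (T × T)) (hB : NormalFamily hT lo B) :
    ∃ B' ⊆ B, ¬ B'.Countable ∧
      ∃ c : T, ∀ b ∈ B', lexLT hT lo b.1 c ∧ lexLT hT lo c b.2 := by
  obtain ⟨hBu, hBlex, hBdisj, hBht, hBbdd, hBlt, -⟩ := hB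
  set δ := sSup {α : Ordinal | ∃ b ∈ B, α = delta hT b.1 b.2}
  have hδ (b) (hb : b ∈ B) : delta hT b.1 b.2 + 1 ≤ δ + 1 :=
    add_le_add_left (le_csSup hBbdd ⟨b, hb, rfl⟩) 1
  obtain ⟨b₀, hb₀⟩ : B.Nonempty := nonempty_iff_ne_empty.2 fun h => hBu (h ▸ countable_empty)
  have hμ : sInf {α : Ordinal | ∃ b ∈ B, α = nodeHt hT b.1} ≤ nodeHt hT b₀.1 :=
    csInf_le (OrderBot.bddBelow _) ⟨b₀, hb₀, rfl⟩
  have hδω : δ + 1 < omega1 := add_one_lt_omega1 (hBlt.trans (hμ.trans_lt (hAron.1.1 b₀.1)))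
  have hlow : {t : T | nodeHt hT t ≤ δ + 1}.Countable :=
    countable_setOf_nodeHt_le hT hAron.1.2.2 hδω
  set B₁ := {b ∈ B | δ + 1 < nodeHt hT b.1}
  have hB₁ : ¬ B₁.Countable := by
    have hB₀ : {b ∈ B | nodeHt hT b.1 ≤ δ + 1}.Countable :=
      MapsTo.countable_of_injOn (fun b hb => hb.2) (hBdisj.injOn_fst.mono fun _ hb => hb.1) hlow
    refine fun h => hBu ((h.union hB₀).mono fun b hb => ?_)
    exact (lt_or_ge (δ + 1) (nodeHt hT b.1)).imp (fun h => ⟨hb, h⟩) (fun h => ⟨hb, h⟩)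
  have hsplit (b) (hb : b ∈ B₁) : delta hT b.1 b.2 + 1 < nodeHt hT b.2 :=
    hBht b hb.1 ▸ (hδ b hb.1).trans_lt hb.2
  have hmaps : MapsTo (fun b => restr hT b.2 (delta hT b.1 b.2 + 1)) B₁ {t | nodeHt hT t ≤ δ + 1} :=
    fun b hb => (nodeHt_restr hT (hsplit b hb).le).trans_le (hδ b hb.1)
  obtain ⟨c, hc⟩ := exists_not_countable_fiber hmaps hlow hB₁
  refine ⟨_, fun b hb => hb.1.1, hc, c, ?_⟩
  rintro b ⟨hb, rfl⟩
  exact lexLT_restr_delta_add_one hT (hBlex b hb.1) (hBht b hb.1) (hsplit b hb)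

/-- Every normal family in a lexicographically ordered Aronszajn tree contains an
uncountable separated subfamily: there are an uncountable `B' ⊆ B` and `c ∈ T` with
`b(0) <lex c <lex b(1)` for all `b ∈ B'`. -/
theorem normalFamily_has_uncountable_separated_subfamily {T : Type} [PartialOrder T]
    (hT : IsSetTree T) (lo : T → T → Prop) (hlo : IsLevelOrderFamily hT lo)
    (hAron : IsAronszajnTree hT)
    (B : Set (T × T)) (hB : NormalFamily hT lo B) :
    ∃ B' ⊆ B, ¬ B'.Countable ∧
      ∃ c : T, ∀ b ∈ B', lexLT hT lo b.1 c ∧ lexLT hT lo c b.2 :=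
  normalFamily_has_uncountable_separated_subfamily_general hT lo hAron B hB

end
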